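/- arXiv:2411.19883 — 2 statements merged into one kernel-verified Lean document; each statement's English description precedes it below -/
import Mathlib

section
/- Let M be a finitely generated 𝔹-module. Then M is reflexive: the canonical map M → Hom_𝔹(Hom_𝔹(M,𝔹),𝔹), sending m to evaluation at m, is an isomorphism of 𝔹-modules. -/
/-!
A finite module `M` over the two-element semifield `B` is a finite join-semilattice, with
`x ≤ y` meaning `x + y = y`. A functional `φ : M → B` is determined by its zero set, which is
closed under sums and downward closed, hence the principal ideal below its largest element (the
sum of the zero set). So every functional has the form `x ↦ if x ≤ a then 0 else 1`; these
functionals separate points, which gives injectivity of evaluation. Applying the description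
twice, a functional `Φ` on the dual vanishes exactly on the `φ ≤ ψ` for some `ψ`, and `ψ`
vanishes exactly below some `a : M`; then `Φ φ = 0 ↔ φ a = 0`, so `Φ` is evaluation at `a`.
-/

open Module

section IdempotentMonoid

variable {M : Type*} [AddCommMonoid M]

lemma add_add_eq_right_iff (hM : ∀ m : M, m + m = m) {x y n : M} :
    x + y + n = n ↔ x + n = n ∧ y + n = n := by
  refine ⟨fun h => ⟨?_, ?_⟩, fun ⟨hx, hy⟩ => by rw [add_assoc, hy, hx]⟩
  · calc x + n = x + (x + y + n) := by rw [h]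
      _ = x + y + n := by rw [← add_assoc, ← add_assoc, hM]
      _ = n := h
  · calc y + n = y + (x + y + n) := by rw [h]
      _ = x + y + n := by rw [add_comm x y, ← add_assoc, ← add_assoc, hM]
      _ = n := h

lemma add_sum_eq_sum_of_mem (hM : ∀ m : M, m + m = m) {s : Finset M} {x : M} (hx : x ∈ s) :
    x + ∑ y ∈ s, y = ∑ y ∈ s, y := by
  classical
  rw [← Finset.add_sum_erase s (fun y => y) hx, ← add_assoc, hM]

end IdempotentMonoid

section Boolean

variable {B : Type*} [CommSemiring B]

lemma add_eq_right_iff_of_two (htwo : ∀ a : B, a = 0 ∨ a = 1) (hidem : (1 : B) + 1 = 1)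
    {b c : B} : b + c = c ↔ (c = 0 → b = 0) := by
  rcases htwo c with rfl | rfl
  · simp
  · refine ⟨fun _ h => by rw [← mul_one b, h, mul_zero], fun _ => ?_⟩
    rcases htwo b with rfl | rfl
    · exact zero_add 1
    · exact hidem

lemma finite_of_two (htwo : ∀ a : B, a = 0 ∨ a = 1) : Finite B :=
  .of_surjective (fun b : Bool => if b then 1 else 0) fun a => by
    rcases htwo a with rfl | rfl
    exacts [⟨false, rfl⟩, ⟨true, rfl⟩]

variable {M : Type*} [AddCommMonoid M] [Module B M]

lemma add_self_of_one_add_one (hidem : (1 : B) + 1 = 1) (m : M) : m + m = m := by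
  simpa only [add_smul, one_smul] using congrArg (· • m) hidem

lemma eq_zero_of_add_eq_zero_of_two (htwo : ∀ a : B, a = 0 ∨ a = 1) (hidem : (1 : B) + 1 = 1)
    {a b : B} (h : a + b = 0) : a = 0 :=
  (add_eq_right_iff_of_two htwo hidem).mp
    (by rw [← add_assoc, add_self_of_one_add_one hidem]) h

lemma eq_of_forall_eq_zero_iff_of_two {X : Type*} (htwo : ∀ a : B, a = 0 ∨ a = 1) {f g : X → B}
    (h : ∀ x, f x = 0 ↔ g x = 0) : f = g := by
  funext x
  by_cases hf : f x = 0
  · rw [hf, (h x).mp hf]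
  · rw [(htwo (f x)).resolve_left hf, (htwo (g x)).resolve_left (hf ∘ (h x).mpr)]

lemma Module.Dual.add_eq_right_iff_of_two (htwo : ∀ a : B, a = 0 ∨ a = 1)
    (hidem : (1 : B) + 1 = 1) {φ ψ : Dual B M} : φ + ψ = ψ ↔ ∀ x, ψ x = 0 → φ x = 0 := by
  simp only [LinearMap.ext_iff, LinearMap.add_apply, _root_.add_eq_right_iff_of_two htwo hidem]

open scoped Classical in
noncomputable def Module.Dual.principal (htwo : ∀ a : B, a = 0 ∨ a = 1)
    (hidem : (1 : B) + 1 = 1) (n : M) : Dual B M where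
  toFun x := if x + n = n then 0 else 1
  map_add' x y := by
    simp only [add_add_eq_right_iff (add_self_of_one_add_one hidem)]
    split_ifs <;> simp_all
  map_smul' c x := by
    rcases htwo c with rfl | rfl <;> simp

lemma Module.Dual.principal_apply_eq_zero_iff (htwo : ∀ a : B, a = 0 ∨ a = 1)
    (hidem : (1 : B) + 1 = 1) (hne : (0 : B) ≠ 1) (n x : M) :
    principal htwo hidem n x = 0 ↔ x + n = n := by
  simp [principal, hne.symm]

lemma Module.Dual.exists_apply_eq_zero_iff (htwo : ∀ a : B, a = 0 ∨ a = 1)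
    (hidem : (1 : B) + 1 = 1) [Finite M] (φ : Dual B M) :
    ∃ a : M, ∀ x, φ x = 0 ↔ x + a = a := by
  classical
  have := Fintype.ofFinite M
  let zeros : Finset M := Finset.univ.filter (φ · = 0)
  have hzeros (x : M) : x ∈ zeros ↔ φ x = 0 := by simp [zeros]
  refine ⟨∑ y ∈ zeros, y, fun x => ⟨fun hx => ?_, fun hx => ?_⟩⟩
  · exact add_sum_eq_sum_of_mem (add_self_of_one_add_one hidem) ((hzeros x).mpr hx)
  · have hsum : φ (∑ y ∈ zeros, y) = 0 :=
      (map_sum φ _ _).trans (Finset.sum_eq_zero fun y hy => (hzeros y).mp hy)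
    exact eq_zero_of_add_eq_zero_of_two htwo hidem (by rw [← map_add, hx, hsum])

lemma Module.Dual.eval_injective_of_two (htwo : ∀ a : B, a = 0 ∨ a = 1)
    (hidem : (1 : B) + 1 = 1) (hne : (0 : B) ≠ 1) : Function.Injective (Dual.eval B M) := by
  intro m m' h
  have hle (n : M) : m + n = n ↔ m' + n = n := by
    simp only [← principal_apply_eq_zero_iff htwo hidem hne]
    rw [← Dual.eval_apply, h, Dual.eval_apply]
  have hidemM := add_self_of_one_add_one (M := M) hidem
  rw [← (hle m').mpr (hidemM m'), add_comm, (hle m).mp (hidemM m)]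

lemma Module.Dual.eval_surjective_of_two (htwo : ∀ a : B, a = 0 ∨ a = 1)
    (hidem : (1 : B) + 1 = 1) [Finite M] : Function.Surjective (Dual.eval B M) := by
  intro Φ
  have := finite_of_two htwo
  have : Finite (Dual B M) := .of_injective _ DFunLike.coe_injective
  obtain ⟨ψ, hψ⟩ := exists_apply_eq_zero_iff htwo hidem Φ
  obtain ⟨a, ha⟩ := exists_apply_eq_zero_iff htwo hidem ψ
  refine ⟨a, LinearMap.ext fun φ => congrFun (eq_of_forall_eq_zero_iff_of_two htwo fun φ => ?_) φ⟩
  rw [Dual.eval_apply, hψ, add_eq_right_iff_of_two htwo hidem]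
  simp only [ha]
  refine ⟨fun h x hx => eq_zero_of_add_eq_zero_of_two htwo hidem (b := φ a) ?_,
    fun h => h a ?_⟩
  · rw [← map_add, hx, h]
  · exact add_self_of_one_add_one hidem a

end Boolean

/-- A finitely generated module over the Boolean semifield (an arbitrary
two-element idempotent semiring `B`) is reflexive: the canonical evaluation
map into the double dual is bijective. -/
theorem boolean_module_reflexive
    (B M : Type*) [CommSemiring B]
    (htwo : ∀ a : B, a = 0 ∨ a = 1) (hidem : (1 : B) + 1 = 1) (hne : (0 : B) ≠ 1)
    [AddCommMonoid M] [Module B M] [Module.Finite B M] :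
    Function.Bijective (Module.Dual.eval B M) := by
  have := finite_of_two htwo
  have : Finite M := Module.finite_of_finite B
  exact ⟨Dual.eval_injective_of_two htwo hidem hne, Dual.eval_surjective_of_two htwo hidem⟩
end

section
/- Let G be a finite group, K an idempotent semifield, and V, W indecomposable representations of G over K with associated stabilizer subgroups H_V and H_W. Then the set of homomorphisms of representations V → W is in bijection with the set of functions from the double coset space H_V\G/H_W to K. -/
/-!
An idempotent semifield is zero-sum-free and has no zero divisors, so every invertible matrix
over it is monomial: each `ρ g` permutes the coordinate lines, and these permutations form an
action of `G` on the coordinates. Indecomposability forces this action to be transitive, since an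
orbit and its complement would split the representation, and the stabilizer `H_V` of the line
through `e_{i₀}` is the point stabilizer of `i₀`. The scalars by which `H_V` acts on that line are
roots of unity, and an idempotent semifield has none besides `1`; so `H_V` fixes `e_{i₀}`, and the
vectors `ρ g e_{i₀}` form a basis permuted by `G`, i.e. `V ≅ K[G/H_V]`, and likewise
`W ≅ K[G/H_W]`. Equivariant maps between permutation modules are the `G`-invariant matrices, that
is functions on the `G`-orbits of `G/H_W × G/H_V`, and these orbits are the double cosets
`H_V \ G / H_W`.
-/

open MulAction

theorem eq_zero_of_add_eq_zero_of_idem {K : Type*} [AddMonoid K] (hidem : ∀ a : K, a + a = a)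
    {a b : K} (h : a + b = 0) : a = 0 :=
  calc a = a + (a + b) := by rw [h, add_zero]
    _ = 0 := by rw [← add_assoc, hidem, h]

theorem Finset.eq_zero_of_sum_eq_zero_of_idem {K ι : Type*} [AddCommMonoid K]
    (hidem : ∀ a : K, a + a = a) {s : Finset ι} {f : ι → K} (h : ∑ i ∈ s, f i = 0) {i : ι}
    (hi : i ∈ s) : f i = 0 := by
  classical
  rw [← Finset.add_sum_erase s f hi] at h
  exact eq_zero_of_add_eq_zero_of_idem hidem h

/-- Multiplication by `c` permutes the terms of `∑_{t<k} c^t`, a sum that cannot vanish. -/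
theorem eq_one_of_pow_eq_one_of_idem {K : Type*} [DivisionSemiring K]
    (hidem : ∀ a : K, a + a = a) {c : K} {k : ℕ} (hk : k ≠ 0) (h : c ^ k = 1) : c = 1 := by
  obtain ⟨k, rfl⟩ := Nat.exists_eq_succ_of_ne_zero hk
  have hs : ∑ t ∈ Finset.range (k + 1), c ^ t ≠ 0 := fun h0 => one_ne_zero <|
    pow_zero c ▸ Finset.eq_zero_of_sum_eq_zero_of_idem hidem h0 (Finset.mem_range.2 k.succ_pos)
  refine mul_right_cancel₀ hs (Eq.trans ?_ (one_mul _).symm)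
  calc c * ∑ t ∈ Finset.range (k + 1), c ^ t = ∑ t ∈ Finset.range (k + 1), c ^ (t + 1) := by
        simp only [Finset.mul_sum, pow_succ']
    _ = ∑ t ∈ Finset.range k, c ^ (t + 1) + c ^ 0 := by rw [Finset.sum_range_succ, h, pow_zero]
    _ = ∑ t ∈ Finset.range (k + 1), c ^ t := (Finset.sum_range_succ' _ k).symm

theorem Matrix.exists_ne_zero_and_eq_zero_of_mul_eq_one {K ι : Type*} [Semiring K]
    [NoZeroDivisors K] [Nontrivial K] [Fintype ι] [DecidableEq ι] (hidem : ∀ a : K, a + a = a)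
    {M N : Matrix ι ι K} (hMN : M * N = 1) (hNM : N * M = 1) (i : ι) :
    ∃ j, M j i ≠ 0 ∧ ∀ j' ≠ j, M j' i = 0 := by
  have hdiag : ∑ j, N i j * M j i ≠ 0 := by
    rw [← Matrix.mul_apply, hNM, Matrix.one_apply_eq]; exact one_ne_zero
  obtain ⟨j, -, hj⟩ := Finset.exists_ne_zero_of_sum_ne_zero hdiag
  refine ⟨j, right_ne_zero_of_mul hj, fun j' hj' => ?_⟩
  have hoff : ∑ k, M j' k * N k j = 0 := by
    rw [← Matrix.mul_apply, hMN, Matrix.one_apply_ne hj']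
  exact (mul_eq_zero.1 (Finset.eq_zero_of_sum_eq_zero_of_idem hidem hoff (Finset.mem_univ i))
    ).resolve_right (left_ne_zero_of_mul hj)

theorem Pi.eq_of_smul_single_one_eq {K ι : Type*} [Semiring K] [DecidableEq ι]
    {i j : ι} {s t : K} (hs : s ≠ 0) (h : s • (Pi.single i 1 : ι → K) = t • Pi.single j 1) :
    i = j := by
  by_contra hij
  simpa [Pi.single_apply, hij, hs] using congrFun h i

theorem Pi.span_single_one_eq_iff {K ι : Type*} [Semiring K] [Nontrivial K] [DecidableEq ι]
    {i j : ι} : K ∙ (Pi.single i 1 : ι → K) = K ∙ Pi.single j 1 ↔ i = j := by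
  refine ⟨fun h => ?_, fun h => h ▸ rfl⟩
  obtain ⟨t, ht⟩ := Submodule.mem_span_singleton.1 (h ▸ Submodule.mem_span_singleton_self _)
  by_contra hij
  simpa [Pi.single_apply, hij] using congrFun ht i

theorem Submodule.existsUnique_add_mem_pi_bot_compl {K ι : Type*} [Semiring K] (S : Set ι)
    (z : ι → K) :
    ∃! w : Submodule.pi Sᶜ (fun _ => (⊥ : Submodule K K)) ×
        Submodule.pi S (fun _ => (⊥ : Submodule K K)),
      (w.1 : ι → K) + (w.2 : ι → K) = z := by
  classical
  refine ⟨(⟨S.indicator z, fun i hi => (Submodule.mem_bot K).2 (Set.indicator_of_notMem hi z)⟩,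
    ⟨Sᶜ.indicator z, fun i hi =>
      (Submodule.mem_bot K).2 (Set.indicator_of_notMem (Set.notMem_compl_iff.2 hi) z)⟩),
    Set.indicator_self_add_compl S z, ?_⟩
  rintro ⟨⟨u, hu⟩, ⟨v, hv⟩⟩ huv
  simp only [Submodule.mem_pi, Submodule.mem_bot] at hu hv
  ext i <;> by_cases hi : i ∈ S <;> simp [hi, ← huv, hu i, hv i]

theorem Submodule.pi_bot_ne_bot {K ι : Type*} [Semiring K] [Nontrivial K] {T : Set ι} {i : ι}
    (hi : i ∉ T) : Submodule.pi T (fun _ => (⊥ : Submodule K K)) ≠ ⊥ := by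
  classical
  refine (Submodule.ne_bot_iff _).2
    ⟨Pi.single i 1, fun j hj => ?_, Pi.single_ne_zero_iff.2 one_ne_zero⟩
  exact (Submodule.mem_bot K).2 (Pi.single_eq_of_ne (by rintro rfl; exact hi hj) _)

namespace Representation

def IsDecomposable {K G V : Type*} [CommSemiring K] [Monoid G] [AddCommMonoid V] [Module K V]
    (ρ : Representation K G V) : Prop :=
  ∃ p q : Submodule K V, (∀ g : G, ∀ y ∈ p, ρ g y ∈ p) ∧ (∀ g : G, ∀ y ∈ q, ρ g y ∈ q) ∧
    p ≠ ⊥ ∧ q ≠ ⊥ ∧ ∀ z : V, ∃! w : p × q, (w.1 : V) + (w.2 : V) = z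

variable {K G : Type*} [Semifield K] [Group G]

variable {ι : Type*} [DecidableEq ι]

theorem eq_stabilizer_of_mem_iff_map_span_single [MulAction G ι]
    {ρ : Representation K G (ι → K)} {c : G → ι → K} (hc : ∀ g i, c g i ≠ 0)
    (hρ : ∀ g i, ρ g (Pi.single i 1) = c g i • Pi.single (g • i) 1) {H : Subgroup G} {i₀ : ι}
    (hH : ∀ g : G, g ∈ H ↔
      Submodule.map (ρ g) (K ∙ Pi.single i₀ 1) = K ∙ Pi.single i₀ 1) :
    H = stabilizer G i₀ := by
  ext g
  rw [hH, mem_stabilizer_iff, Submodule.map_span, Set.image_singleton, hρ,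
    Submodule.span_singleton_smul_eq (hc g i₀).isUnit, Pi.span_single_one_eq_iff]

variable [Fintype ι]

theorem exists_apply_single_eq_smul_single (hidem : ∀ a : K, a + a = a)
    (ρ : Representation K G (ι → K)) (g : G) (i : ι) :
    ∃ j, ∃ s : K, s ≠ 0 ∧ ρ g (Pi.single i 1) = s • Pi.single j 1 := by
  have hinv : ∀ g h : G, g * h = 1 →
      LinearMap.toMatrix' (ρ g) * LinearMap.toMatrix' (ρ h) = 1 := fun g h hgh => by
    rw [← LinearMap.toMatrix'_mul, ← map_mul, hgh, map_one, LinearMap.toMatrix'_one]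
  obtain ⟨j, hj, hcol⟩ := Matrix.exists_ne_zero_and_eq_zero_of_mul_eq_one hidem
    (hinv _ _ (mul_inv_cancel g)) (hinv _ _ (inv_mul_cancel g)) i
  refine ⟨j, LinearMap.toMatrix' (ρ g) j i, hj, funext fun j' => ?_⟩
  rcases eq_or_ne j' j with rfl | hj'
  · simp [LinearMap.toMatrix'_apply]
  · simpa [LinearMap.toMatrix'_apply, hj'] using hcol j' hj'

theorem exists_mulAction_apply_single (hidem : ∀ a : K, a + a = a)
    (ρ : Representation K G (ι → K)) :
    ∃ (_ : MulAction G ι) (c : G → ι → K), (∀ g i, c g i ≠ 0) ∧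
      ∀ g i, ρ g (Pi.single i 1) = c g i • Pi.single (g • i) 1 := by
  choose σ c hc hσ using ρ.exists_apply_single_eq_smul_single hidem
  have hσ_one : ∀ i, σ 1 i = i := fun i => Eq.symm <|
    Pi.eq_of_smul_single_one_eq (t := c 1 i) one_ne_zero <| by
      rw [one_smul, ← hσ, map_one, Module.End.one_apply]
  have hσ_mul : ∀ g h i, σ (g * h) i = σ g (σ h i) := fun g h i =>
    Pi.eq_of_smul_single_one_eq (hc (g * h) i) <| by
      rw [← hσ, map_mul, Module.End.mul_apply, hσ, map_smul, hσ, smul_smul]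
  exact ⟨{ smul := σ, one_smul := hσ_one, mul_smul := hσ_mul }, c, hc, hσ⟩

variable [MulAction G ι] {ρ : Representation K G (ι → K)} {c : G → ι → K}

theorem apply_smul_apply (hρ : ∀ g i, ρ g (Pi.single i 1) = c g i • Pi.single (g • i) 1)
    (g : G) (x : ι → K) (i : ι) : ρ g x (g • i) = c g i * x i := by
  have hsingle : ∀ k, ρ g (Pi.single k (x k)) = x k • c g k • Pi.single (g • k) 1 := fun k => by
    rw [← hρ, ← map_smul, ← Pi.single_smul', smul_eq_mul, mul_one]
  conv_lhs => rw [← Finset.univ_sum_single x]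
  rw [map_sum, Finset.sum_apply, Finset.sum_eq_single i (fun k _ hk => by simp [hsingle, hk])
    (by simp)]
  simp [hsingle, mul_comm]

theorem cocycle_mul (hρ : ∀ g i, ρ g (Pi.single i 1) = c g i • Pi.single (g • i) 1)
    (g h : G) (i : ι) : c (g * h) i = c g (h • i) * c h i := by
  simpa [mul_smul, apply_smul_apply hρ] using (apply_smul_apply hρ (g * h) (Pi.single i 1) i).symm

theorem apply_single_eq_self_of_smul_eq [Finite G] (hidem : ∀ a : K, a + a = a)
    (hρ : ∀ g i, ρ g (Pi.single i 1) = c g i • Pi.single (g • i) 1) {g : G} {i : ι}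
    (hg : g • i = i) : ρ g (Pi.single i 1) = Pi.single i 1 := by
  have hpow : ∀ k : ℕ, c (g ^ k) i = c g i ^ k := by
    intro k
    induction k with
    | zero => simpa using (apply_smul_apply hρ 1 (Pi.single i 1) i).symm
    | succ k ih => rw [pow_succ, cocycle_mul hρ, hg, ih, pow_succ]
  have hc : c g i = 1 := eq_one_of_pow_eq_one_of_idem hidem Nat.card_pos.ne' <| by
    rw [← hpow, pow_card_eq_one', ← pow_zero g, hpow, pow_zero]
  rw [hρ, hg, hc, one_smul]

theorem apply_mem_pi_bot (hρ : ∀ g i, ρ g (Pi.single i 1) = c g i • Pi.single (g • i) 1)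
    {T : Set ι} (hT : ∀ (g : G) i, g • i ∈ T ↔ i ∈ T) (g : G) {x : ι → K}
    (hx : x ∈ Submodule.pi T fun _ => (⊥ : Submodule K K)) :
    ρ g x ∈ Submodule.pi T fun _ => (⊥ : Submodule K K) := by
  simp only [Submodule.mem_pi, Submodule.mem_bot] at hx ⊢
  intro i hi
  rw [← smul_inv_smul g i, apply_smul_apply hρ, hx _ ((hT g _).1 (by rwa [smul_inv_smul])),
    mul_zero]

theorem isPretransitive_of_not_isDecomposable
    (hρ : ∀ g i, ρ g (Pi.single i 1) = c g i • Pi.single (g • i) 1)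
    (hindec : ¬ ρ.IsDecomposable) : IsPretransitive G ι := by
  refine ⟨fun x y => ?_⟩
  by_contra hxy
  have hy : y ∉ orbit G x := fun h => hxy (mem_orbit_iff.1 h)
  have hS : ∀ (g : G) i, g • i ∈ orbit G x ↔ i ∈ orbit G x := fun g i => by
    rw [← orbit_eq_iff, orbit_smul, orbit_eq_iff]
  have hSc : ∀ (g : G) i, g • i ∈ (orbit G x)ᶜ ↔ i ∈ (orbit G x)ᶜ := fun g i =>
    not_congr (hS g i)
  exact hindec ⟨_, _, fun g _ => apply_mem_pi_bot hρ hSc g, fun g _ => apply_mem_pi_bot hρ hS g,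
    Submodule.pi_bot_ne_bot (Set.notMem_compl_iff.2 (mem_orbit_self x)),
    Submodule.pi_bot_ne_bot hy, Submodule.existsUnique_add_mem_pi_bot_compl _⟩

theorem exists_basis_apply_eq_smul [IsPretransitive G ι] (hc : ∀ g i, c g i ≠ 0)
    (hρ : ∀ g i, ρ g (Pi.single i 1) = c g i • Pi.single (g • i) 1) (i₀ : ι)
    (hfix : ∀ g : G, g • i₀ = i₀ → ρ g (Pi.single i₀ 1) = Pi.single i₀ 1) :
    ∃ b : Module.Basis ι K (ι → K), ∀ g i, ρ g (b i) = b (g • i) := by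
  choose γ hγ using exists_smul_eq G i₀
  let b := (Pi.basisFun K ι).isUnitSMul (w := fun i => c (γ i) i₀) fun i => (hc _ _).isUnit
  have hb : ∀ i, b i = ρ (γ i) (Pi.single i₀ 1) := fun i => by
    rw [Module.Basis.isUnitSMul_apply, Pi.basisFun_apply, hρ, hγ]
  refine ⟨b, fun g i => ?_⟩
  have hstab : ((γ (g • i))⁻¹ * g * γ i) • i₀ = i₀ := by
    rw [mul_smul, mul_smul, hγ, inv_smul_eq_iff, hγ]
  calc ρ g (b i) = ρ (γ (g • i)) (ρ ((γ (g • i))⁻¹ * g * γ i) (Pi.single i₀ 1)) := by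
        rw [hb, ← Module.End.mul_apply, ← map_mul, ← Module.End.mul_apply, ← map_mul]
        group
    _ = b (g • i) := by rw [hfix _ hstab, hb]

end Representation

section PermutationModule

variable {K G V W ι κ : Type*} [CommSemiring K] [Group G] [AddCommMonoid V] [Module K V]
  [AddCommMonoid W] [Module K W] [MulAction G ι] [MulAction G κ]
  {ρ : Representation K G V} {η : Representation K G W}

theorem Module.Basis.repr_apply_smul {b : Module.Basis κ K W} (hb : ∀ g j, η g (b j) = b (g • j))
    (g : G) (w : W) (j : κ) : b.repr (η g w) (g • j) = b.repr w j := by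
  have : (Finsupp.lapply (g • j)) ∘ₗ b.repr.toLinearMap ∘ₗ η g =
      Finsupp.lapply j ∘ₗ b.repr.toLinearMap :=
    b.ext fun k => by simp [hb, Finsupp.single_apply_left (MulAction.injective g)]
  exact LinearMap.congr_fun this w

variable [Fintype ι] [DecidableEq ι] [Finite κ] {b : Module.Basis ι K V} {b' : Module.Basis κ K W}

theorem LinearMap.equivariant_iff_toMatrix_smul_smul (hb : ∀ g i, ρ g (b i) = b (g • i))
    (hb' : ∀ g j, η g (b' j) = b' (g • j)) (f : V →ₗ[K] W) :
    (∀ g x, f (ρ g x) = η g (f x)) ↔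
      ∀ (g : G) j i, LinearMap.toMatrix b b' f (g • j) (g • i) = LinearMap.toMatrix b b' f j i := by
  simp only [LinearMap.toMatrix_apply]
  constructor
  · intro hf g j i
    rw [← hb, hf, b'.repr_apply_smul hb']
  · intro hf g
    suffices f ∘ₗ ρ g = η g ∘ₗ f from LinearMap.congr_fun this
    refine b.ext fun i => b'.repr.injective (Finsupp.ext fun j => ?_)
    rw [LinearMap.comp_apply, LinearMap.comp_apply, hb, ← smul_inv_smul g j,
      b'.repr_apply_smul hb', hf]

noncomputable def equivariantEquivInvariantMatrix (hb : ∀ g i, ρ g (b i) = b (g • i))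
    (hb' : ∀ g j, η g (b' j) = b' (g • j)) :
    {f : V →ₗ[K] W // ∀ g x, f (ρ g x) = η g (f x)} ≃
      {M : Matrix κ ι K // ∀ (g : G) j i, M (g • j) (g • i) = M j i} :=
  (LinearMap.toMatrix b b').toEquiv.subtypeEquiv
    (LinearMap.equivariant_iff_toMatrix_smul_smul hb hb')

end PermutationModule

namespace DoubleCoset

variable {G α β : Type*} [Group G] [MulAction G α] [MulAction G β]

theorem mk_inv_mul_eq_of_smul_eq {a : α} {b : β} {g₁ g₂ k₁ k₂ : G} (hg : g₁ • a = g₂ • a)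
    (hk : k₁ • b = k₂ • b) :
    mk (stabilizer G a) (stabilizer G b) (g₁⁻¹ * k₁) =
      mk (stabilizer G a) (stabilizer G b) (g₂⁻¹ * k₂) := by
  rw [DoubleCoset.eq]
  refine ⟨g₂⁻¹ * g₁, ?_, k₁⁻¹ * k₂, ?_, by group⟩
  · rw [mem_stabilizer_iff, mul_smul, hg, inv_smul_smul]
  · rw [mem_stabilizer_iff, mul_smul, ← hk, inv_smul_smul]

variable [IsPretransitive G α] [IsPretransitive G β]

variable (G) in
noncomputable def relativePosition (a : α) (b : β) (y : β) (x : α) :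
    Quotient (stabilizer G a : Set G) (stabilizer G b) :=
  mk _ _ ((exists_smul_eq G a x).choose⁻¹ * (exists_smul_eq G b y).choose)

theorem relativePosition_eq {a : α} {b : β} {g k : G} :
    relativePosition G a b (k • b) (g • a) = mk _ _ (g⁻¹ * k) :=
  mk_inv_mul_eq_of_smul_eq (exists_smul_eq G a _).choose_spec (exists_smul_eq G b _).choose_spec

theorem relativePosition_smul_smul {a : α} {b : β} (g : G) (y : β) (x : α) :
    relativePosition G a b (g • y) (g • x) = relativePosition G a b y x := by
  obtain ⟨h, rfl⟩ := exists_smul_eq G a x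
  obtain ⟨k, rfl⟩ := exists_smul_eq G b y
  rw [smul_smul, smul_smul, relativePosition_eq, relativePosition_eq, mul_inv_rev, mul_assoc,
    inv_mul_cancel_left]

noncomputable def invariantFunEquiv (X : Type*) (a : α) (b : β) :
    {f : β → α → X // ∀ (g : G) y x, f (g • y) (g • x) = f y x} ≃
      (Quotient (stabilizer G a : Set G) (stabilizer G b) → X) where
  toFun f := Quotient.lift (fun g => f.1 (g • b) a) fun g g' hgg' => by
    obtain ⟨h, hh, k, hk, rfl⟩ := rel_iff.1 hgg'
    rw [mul_smul, mul_smul, mem_stabilizer_iff.1 hk, ← f.2 h, mem_stabilizer_iff.1 hh]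
  invFun F := ⟨fun y x => F (relativePosition G a b y x), fun g y x =>
    congrArg F (relativePosition_smul_smul g y x)⟩
  left_inv f := by
    ext y x
    obtain ⟨h, rfl⟩ := exists_smul_eq G a x
    obtain ⟨k, rfl⟩ := exists_smul_eq G b y
    dsimp only
    rw [relativePosition_eq]
    change f.1 ((h⁻¹ * k) • b) a = f.1 (k • b) (h • a)
    rw [← f.2 h, smul_smul, mul_inv_cancel_left]
  right_inv F := funext fun q => Quotient.inductionOn q fun g => by
    have hg : relativePosition G a b (g • b) a = mk _ _ g := by
      simpa using relativePosition_eq (a := a) (b := b) (g := 1) (k := g)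
    exact congrArg F hg

end DoubleCoset

/-- For indecomposable representations `V = K^n`, `W = K^m` of a finite group
`G` over an idempotent semifield `K`, with associated stabilizer subgroups
`H_V`, `H_W` (stabilizers of basis lines), the homomorphisms of
representations `V → W` are in bijection with functions from the double coset
space `H_V \ G / H_W` to `K`. -/
theorem homs_correspond_to_double_cosets
    (K G : Type*) [Semifield K] (hidem : ∀ a : K, a + a = a)
    [Group G] [Fintype G] (n m : ℕ)
    (ρ : Representation K G (Fin n → K)) (η : Representation K G (Fin m → K))
    (hindecV : ¬ ∃ p q : Submodule K (Fin n → K),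
        (∀ g : G, ∀ y ∈ p, ρ g y ∈ p) ∧ (∀ g : G, ∀ y ∈ q, ρ g y ∈ q) ∧
        p ≠ ⊥ ∧ q ≠ ⊥ ∧
        ∀ z : Fin n → K, ∃! w : p × q, (w.1 : Fin n → K) + (w.2 : Fin n → K) = z)
    (hindecW : ¬ ∃ p q : Submodule K (Fin m → K),
        (∀ g : G, ∀ y ∈ p, η g y ∈ p) ∧ (∀ g : G, ∀ y ∈ q, η g y ∈ q) ∧
        p ≠ ⊥ ∧ q ≠ ⊥ ∧
        ∀ z : Fin m → K, ∃! w : p × q, (w.1 : Fin m → K) + (w.2 : Fin m → K) = z)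
    (i₀ : Fin n) (j₀ : Fin m) (HV HW : Subgroup G)
    (hHV : ∀ g : G, g ∈ HV ↔
        Submodule.map (ρ g) (Submodule.span K {Pi.single i₀ (1 : K)}) =
          Submodule.span K {Pi.single i₀ (1 : K)})
    (hHW : ∀ g : G, g ∈ HW ↔
        Submodule.map (η g) (Submodule.span K {Pi.single j₀ (1 : K)}) =
          Submodule.span K {Pi.single j₀ (1 : K)}) :
    Nonempty
      ({φ : (Fin n → K) →ₗ[K] (Fin m → K) //
          ∀ (g : G) (x : Fin n → K), φ (ρ g x) = η g (φ x)} ≃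
        (DoubleCoset.Quotient (HV : Set G) (HW : Set G) → K)) := by
  obtain ⟨_, cV, hcV, hρ⟩ := ρ.exists_mulAction_apply_single hidem
  obtain ⟨_, cW, hcW, hη⟩ := η.exists_mulAction_apply_single hidem
  have := ρ.isPretransitive_of_not_isDecomposable hρ hindecV
  have := η.isPretransitive_of_not_isDecomposable hη hindecW
  obtain ⟨bV, hbV⟩ := ρ.exists_basis_apply_eq_smul hcV hρ i₀ fun _ =>
    ρ.apply_single_eq_self_of_smul_eq hidem hρ
  obtain ⟨bW, hbW⟩ := η.exists_basis_apply_eq_smul hcW hη j₀ fun _ =>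
    η.apply_single_eq_self_of_smul_eq hidem hη
  obtain rfl := Representation.eq_stabilizer_of_mem_iff_map_span_single hcV hρ hHV
  obtain rfl := Representation.eq_stabilizer_of_mem_iff_map_span_single hcW hη hHW
  exact ⟨(equivariantEquivInvariantMatrix hbV hbW).trans (DoubleCoset.invariantFunEquiv K i₀ j₀)⟩
end
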